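/- Let n ≥ 1, k ≥ 2, let σ = (σ_2,…,σ_k) be a (k−1)-tuple of permutations of {1,…,n}, and let σ_1 = id. For U ∈ E(σ) and i ∈ {1,…,k}, define U(i) = max{ j : {σ_i(1),…,σ_i(j)} ⊆ U } (with max ∅ = 0). Then every U ∈ E(σ) satisfies U = ⋃_{i=1}^{k} {σ_i(1),…,σ_i(U(i))}. Consequently, the map U ↦ (U(1),…,U(k)) is injective on E(σ). -/
import Mathlib


/-- The initial segment `{σ(1), …, σ(j)}` of a permutation `σ` of `{1,…,n}`
(encoded on `Fin n`), as a finset; for `j = 0` this is `∅`. -/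
def iniSeg {n : ℕ} (σ : Equiv.Perm (Fin n)) (j : ℕ) : Finset (Fin n) :=
  (Finset.univ.filter fun m : Fin n => (m : ℕ) < j).image σ

/-- The Edelman–Jamison lattice `E(σ)`: the join-subsemilattice of the powerset of
`{1,…,n}` (ordered by inclusion, with join `∪`) generated by the initial segments
`{σ_i(1),…,σ_i(j)}`, `1 ≤ i ≤ k`, `0 ≤ j ≤ n`. -/
def EJ {n k : ℕ} (σ : Fin k → Equiv.Perm (Fin n)) : Set (Finset (Fin n)) :=
  supClosure {S | ∃ (i : Fin k) (j : ℕ), j ≤ n ∧ S = iniSeg (σ i) j}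

/-- `π`-eligibility of a `k`-tuple `x ∈ {0,…,n}^k`: `π_{ij}(x_i + 1) ≥ x_j + 1` holds
whenever `x_i < n`, where `π_{ij} = π_{1j} ∘ π_{1i}⁻¹` (a value `v ∈ {1,…,n}` is encoded
as the element `v - 1` of `Fin n`). -/
def Eligible {n k : ℕ} (π : Fin k → Equiv.Perm (Fin n)) (x : Fin k → ℕ) : Prop :=
  (∀ i, x i ≤ n) ∧
    ∀ (i j : Fin k) (h : x i < n), x j + 1 ≤ ((π j) ((π i)⁻¹ ⟨x i, h⟩) : ℕ) + 1

/-- `coordOf σ U i = max { j : {σ_i(1),…,σ_i(j)} ⊆ U }`, where `max ∅ = 0`. -/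
noncomputable def coordOf {n k : ℕ} (σ : Fin k → Equiv.Perm (Fin n))
    (U : Finset (Fin n)) (i : Fin k) : ℕ :=
  sSup {j : ℕ | j ≤ n ∧ iniSeg (σ i) j ⊆ U}

lemma iniSeg_mono {n : ℕ} (σ : Equiv.Perm (Fin n)) {j j' : ℕ} (h : j ≤ j') :
    iniSeg σ j ⊆ iniSeg σ j' := by
  apply Finset.image_subset_image
  intro m hm
  simp only [Finset.mem_filter, Finset.mem_univ, true_and] at hm ⊢
  omega

lemma coordOf_mem {n k : ℕ} (σ : Fin k → Equiv.Perm (Fin n)) (U : Finset (Fin n)) (i : Fin k) :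
    coordOf σ U i ≤ n ∧ iniSeg (σ i) (coordOf σ U i) ⊆ U := by
  have h0 : (0 : ℕ) ∈ {j : ℕ | j ≤ n ∧ iniSeg (σ i) j ⊆ U} := by
    constructor
    · exact Nat.zero_le n
    · intro x hx
      simp [iniSeg] at hx
  have hb : BddAbove {j : ℕ | j ≤ n ∧ iniSeg (σ i) j ⊆ U} := ⟨n, fun j hj => hj.1⟩
  exact Nat.sSup_mem ⟨0, h0⟩ hb

lemma le_coordOf {n k : ℕ} (σ : Fin k → Equiv.Perm (Fin n)) (U : Finset (Fin n)) (i : Fin k)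
    {j : ℕ} (hj : j ≤ n) (hsub : iniSeg (σ i) j ⊆ U) : j ≤ coordOf σ U i :=
  le_csSup ⟨n, fun j' hj' => hj'.1⟩ ⟨hj, hsub⟩

/-- Let `n ≥ 1`, `k ≥ 2`, let `σ = (σ_2,…,σ_k)` be a `(k-1)`-tuple of
permutations of `{1,…,n}` (encoded with `σ 0 = id` playing the role of `σ_1`). With
`U(i) = max { j : {σ_i(1),…,σ_i(j)} ⊆ U }` (and `max ∅ = 0`), every `U ∈ E(σ)` satisfies
`U = ⋃_{i=1}^k {σ_i(1),…,σ_i(U(i))}`; consequently `U ↦ (U(1),…,U(k))` is injective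
on `E(σ)`. -/
theorem statement2 (n k : ℕ) (hn : 1 ≤ n) (hk : 2 ≤ k)
    (σ : Fin k → Equiv.Perm (Fin n)) (hσ : σ ⟨0, by omega⟩ = 1) :
    (∀ U ∈ EJ σ, U = Finset.univ.biUnion fun i => iniSeg (σ i) (coordOf σ U i)) ∧
    Set.InjOn (coordOf σ) (EJ σ) := by
  have main : ∀ U ∈ EJ σ, U = Finset.univ.biUnion fun i => iniSeg (σ i) (coordOf σ U i) := by
    rintro U hU
    apply subset_antisymm
    · obtain ⟨t, ht, hts, rfl⟩ := hU
      show t.sup' ht id ≤ _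
      apply Finset.sup'_le
      rintro S hS
      obtain ⟨i, j, hjn, rfl⟩ := hts hS
      have h1 : iniSeg (σ i) j ⊆ t.sup' ht id :=
        Finset.le_sup' (f := id) (b := iniSeg (σ i) j) hS
      have h2 : j ≤ coordOf σ (t.sup' ht id) i := le_coordOf σ _ i hjn h1
      intro x hx
      rw [Finset.mem_biUnion]
      exact ⟨i, Finset.mem_univ i, iniSeg_mono _ h2 hx⟩
    · intro x hx
      rw [Finset.mem_biUnion] at hx
      obtain ⟨i, -, hx⟩ := hx
      exact (coordOf_mem σ U i).2 hx
  refine ⟨main, ?_⟩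
  intro U hU V hV h
  rw [main U hU, main V hV, h]
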